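/- Let K be a field, 3 ≤ q ≤ ∞, and for each n let d_n = d(K, n, q) be the minimal number d such that some quadratic K-algebra with n generators and d relations has vanishing q-th graded component (vanishing some component, if q = ∞). Then the limit of d_n/n² as n → ∞ exists and equals inf_n d_n/n². -/

import Mathlib

open TensorProduct

namespace GS

variable (K : Type*) [Field K] (V : Type*) [AddCommGroup V] [Module K V]

/-- The tensor product of two subspaces, as a subspace of the tensor product. -/
noncomputable def tsub {M N : Type*} [AddCommGroup M] [Module K M] [AddCommGroup N] [Module K N]
    (A : Submodule K M) (B : Submodule K N) : Submodule K (M ⊗[K] N) :=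
  LinearMap.range (TensorProduct.map A.subtype B.subtype)

/-- `V ≃ V^{⊗1}`. -/
noncomputable def pow1 : V ≃ₗ[K] ⨂[K]^1 V :=
  (PiTensorProduct.subsingletonEquiv (R := K) (s := fun _ : Fin 1 => V) (0 : Fin 1)).symm

/-- `V ⊗ V ≃ V^{⊗2}`. -/
noncomputable def pow2 : (V ⊗[K] V) ≃ₗ[K] ⨂[K]^2 V :=
  (TensorProduct.congr (pow1 K V) (pow1 K V)).trans
    ((TensorPower.mulEquiv (n := 1) (m := 1)).trans (TensorPower.cast K V (by norm_num)))

/-- The subspace `V^{⊗a} ⊗ L ⊗ V^{⊗b}` of `V^{⊗(a+(2+b))}`. -/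
noncomputable def segAux (a b : ℕ) (L : Submodule K (V ⊗[K] V)) :
    Submodule K (⨂[K]^(a + (2 + b)) V) :=
  Submodule.map (TensorPower.mulEquiv (R := K) (M := V) (n := a) (m := 2 + b)).toLinearMap
    (tsub K (⊤ : Submodule K (⨂[K]^a V))
      (Submodule.map (TensorPower.mulEquiv (R := K) (M := V) (n := 2) (m := b)).toLinearMap
        (tsub K (L.map (pow2 K V).toLinearMap) (⊤ : Submodule K (⨂[K]^b V)))))

/-- For `j : Fin (q-1)`, the subspace `V^{⊗j} ⊗ L ⊗ V^{⊗(q-2-j)}` of `V^{⊗q}`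
(the `(j+1)`-st shift of `L`). -/
noncomputable def shiftSub (q : ℕ) (L : Submodule K (V ⊗[K] V)) (j : Fin (q - 1)) :
    Submodule K (⨂[K]^q V) :=
  Submodule.map (TensorPower.cast K V (by have := j.2; omega : (j : ℕ) + (2 + (q - 2 - j)) = q)).toLinearMap
    (segAux K V j (q - 2 - j) L)

/-- `E_q(L,V) = ⋂_{j=1}^{q-1} V^{⊗(j-1)} ⊗ L ⊗ V^{⊗(q-1-j)} ⊆ V^{⊗q}`. -/
noncomputable def Eint (q : ℕ) (L : Submodule K (V ⊗[K] V)) : Submodule K (⨂[K]^q V) :=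
  ⨅ j : Fin (q - 1), shiftSub K V q L j

/-- The degree-`q` component of the two-sided ideal generated by the subspace
`M ⊆ V ⊗ V` of quadratic relations: the sum of all shifts `V^{⊗(j-1)} ⊗ M ⊗ V^{⊗(q-1-j)}`. -/
noncomputable def idealComp (q : ℕ) (M : Submodule K (V ⊗[K] V)) : Submodule K (⨂[K]^q V) :=
  ⨆ j : Fin (q - 1), shiftSub K V q M j

/-- The dimension of the degree-`q` component of the quadratic algebra with space of
relations `M ⊆ V ⊗ V` (the quotient of `V^{⊗q}` by the degree-`q` component of the ideal). -/
noncomputable def quadDim (q : ℕ) (M : Submodule K (V ⊗[K] V)) : ℕ :=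
  Module.finrank K ((⨂[K]^q V) ⧸ idealComp K V q M)

/-- `h_q(K,n,d)`: the minimal dimension of the `q`-th graded component over all quadratic
`K`-algebras with `n` generators and `d` (linearly independent) quadratic relations. -/
noncomputable def hq (n d q : ℕ) : ℕ :=
  sInf { h | ∃ M : Submodule K ((Fin n → K) ⊗[K] (Fin n → K)),
      Module.finrank K M = d ∧ quadDim K (Fin n → K) q M = h }

end GS

open Filter

/-!
If relations `M ⊆ V ⊗ V` on `n` generators kill the degree-`q` component, so do the following
relations on `n * m + r` generators: a copy of `M` on each of the `m²` ordered pairs of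
`n`-blocks of generators, together with all quadratic monomials containing one of the `r`
remaining generators. Indeed, a degree-`q` monomial containing a remaining generator lies in the
ideal already in degree two, and any other one is the image of a monomial in `n` letters under a
tensor product of block inclusions, which carries the ideal of `M` into the new ideal. Hence
`d (n * m + r) ≤ m² d n + 2 r (n * m + r)`. Taking `m = N / n` and `r = N % n < n` gives
`d N / N² ≤ d n / n² + 2 n / N`, so `d N / N²` tends to its infimum (as in Fekete's lemma).
-/

namespace GS

open PiTensorProduct Module

attribute [local ext] PiTensorProduct.ext

variable {K : Type*} [Field K] {V W : Type*} [AddCommGroup V] [Module K V]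
  [AddCommGroup W] [Module K W]

section tsub

variable {M N M' N' : Type*} [AddCommGroup M] [Module K M] [AddCommGroup N] [Module K N]
  [AddCommGroup M'] [Module K M'] [AddCommGroup N'] [Module K N']

theorem tsub_eq_span (A : Submodule K M) (B : Submodule K N) :
    tsub K A B = Submodule.span K {t | ∃ a ∈ A, ∃ b ∈ B, a ⊗ₜ[K] b = t} := by
  rw [tsub, TensorProduct.range_map_eq_span_tmul]
  congr 1
  ext t
  constructor
  · rintro ⟨a, b, rfl⟩
    exact ⟨a, a.2, b, b.2, rfl⟩
  · rintro ⟨a, ha, b, hb, rfl⟩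
    exact ⟨⟨a, ha⟩, ⟨b, hb⟩, rfl⟩

theorem tmul_mem_tsub {A : Submodule K M} {B : Submodule K N} {a : M} {b : N}
    (ha : a ∈ A) (hb : b ∈ B) : a ⊗ₜ[K] b ∈ tsub K A B :=
  tsub_eq_span A B ▸ Submodule.subset_span ⟨a, ha, b, hb, rfl⟩

theorem tsub_mono {A A' : Submodule K M} {B B' : Submodule K N} (hA : A ≤ A') (hB : B ≤ B') :
    tsub K A B ≤ tsub K A' B' := by
  rw [tsub_eq_span, tsub_eq_span]
  refine Submodule.span_mono ?_
  rintro t ⟨a, ha, b, hb, rfl⟩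
  exact ⟨a, hA ha, b, hB hb, rfl⟩

theorem map_tsub_le (A : Submodule K M) (B : Submodule K N) (g : M →ₗ[K] M')
    (h : N →ₗ[K] N') :
    (tsub K A B).map (TensorProduct.map g h) ≤ tsub K (A.map g) (B.map h) := by
  rw [tsub_eq_span, tsub_eq_span, Submodule.map_span]
  refine Submodule.span_mono ?_
  rintro t ⟨_, ⟨a, ha, b, hb, rfl⟩, rfl⟩
  exact ⟨g a, ⟨a, ha, rfl⟩, h b, ⟨b, hb, rfl⟩, rfl⟩

theorem tsub_top_top : tsub K (⊤ : Submodule K M) (⊤ : Submodule K N) = ⊤ := by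
  rw [tsub, LinearMap.range_eq_top]
  exact TensorProduct.map_surjective (fun x => ⟨⟨x, trivial⟩, rfl⟩)
    fun x => ⟨⟨x, trivial⟩, rfl⟩

theorem finrank_tsub_le [Module.Finite K M] [Module.Finite K N] (A : Submodule K M)
    (B : Submodule K N) : finrank K (tsub K A B) ≤ finrank K A * finrank K B :=
  (LinearMap.finrank_range_le _).trans_eq finrank_tensorProduct

end tsub

theorem mulEquiv_tprod {a b : ℕ} (x : Fin a → V) (y : Fin b → V) :
    TensorPower.mulEquiv (R := K) (tprod K x ⊗ₜ[K] tprod K y) = tprod K (Fin.append x y) := by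
  rw [← TensorPower.gMul_def, TensorPower.tprod_mul_tprod]

theorem pow2_tmul (v w : V) : pow2 K V (v ⊗ₜ[K] w) = tprod K ![v, w] := by
  simp only [pow2, pow1, LinearEquiv.trans_apply, TensorProduct.congr_tmul,
    PiTensorProduct.subsingletonEquiv_symm_apply, mulEquiv_tprod, TensorPower.cast_tprod]
  congr 1
  funext p
  fin_cases p <;> rfl

theorem map_comp_mulEquiv {a b : ℕ} (f : Fin (a + b) → V →ₗ[K] W) :
    PiTensorProduct.map f ∘ₗ (TensorPower.mulEquiv (R := K) (M := V)).toLinearMap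
      = (TensorPower.mulEquiv (R := K) (M := W)).toLinearMap ∘ₗ
          TensorProduct.map (PiTensorProduct.map fun i => f (Fin.castAdd b i))
            (PiTensorProduct.map fun i => f (Fin.natAdd a i)) := by
  ext x y
  simp only [LinearMap.compMultilinearMap_apply, TensorProduct.AlgebraTensorModule.curry_apply,
    LinearMap.restrictScalars_self, TensorProduct.curry_apply, LinearMap.coe_comp,
    LinearEquiv.coe_coe, Function.comp_apply, TensorProduct.map_tmul, map_tprod, mulEquiv_tprod]
  congr 1
  funext p
  refine Fin.addCases (fun i => ?_) (fun i => ?_) p <;> simp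

theorem map_comp_cast {i j : ℕ} (h : i = j) (f : Fin j → V →ₗ[K] W) :
    PiTensorProduct.map f ∘ₗ (TensorPower.cast K V h).toLinearMap
      = (TensorPower.cast K W h).toLinearMap ∘ₗ
          PiTensorProduct.map fun p => f (Fin.cast h p) := by
  subst h
  simp [TensorPower.cast_refl]

theorem map_comp_pow2 (f : Fin 2 → V →ₗ[K] W) :
    PiTensorProduct.map f ∘ₗ (pow2 K V).toLinearMap
      = (pow2 K W).toLinearMap ∘ₗ TensorProduct.map (f 0) (f 1) := by
  ext v w
  simp only [TensorProduct.AlgebraTensorModule.curry_apply, LinearMap.restrictScalars_self,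
    TensorProduct.curry_apply, LinearMap.coe_comp, LinearEquiv.coe_coe, Function.comp_apply,
    pow2_tmul, TensorProduct.map_tmul, map_tprod]
  congr 1
  funext p
  fin_cases p <;> rfl

theorem shiftSub_mono (q : ℕ) {L L' : Submodule K (V ⊗[K] V)} (h : L ≤ L') (j : Fin (q - 1)) :
    shiftSub K V q L j ≤ shiftSub K V q L' j :=
  Submodule.map_mono <| Submodule.map_mono <| tsub_mono le_rfl <| Submodule.map_mono <|
    tsub_mono (Submodule.map_mono h) le_rfl

theorem idealComp_mono (q : ℕ) {M M' : Submodule K (V ⊗[K] V)} (h : M ≤ M') :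
    idealComp K V q M ≤ idealComp K V q M' :=
  iSup_mono (shiftSub_mono q h)

theorem shiftSub_top (q : ℕ) (j : Fin (q - 1)) : shiftSub K V q ⊤ j = ⊤ := by
  simp only [shiftSub, segAux, Submodule.map_top, LinearEquiv.range, tsub_top_top]

theorem idealComp_top {q : ℕ} (h2 : 2 ≤ q) : idealComp K V q ⊤ = ⊤ :=
  top_unique <| (shiftSub_top (V := V) q ⟨0, by omega⟩).ge.trans (le_iSup _ _)

theorem map_segAux_le (a b : ℕ) (g : Fin (a + (2 + b)) → V →ₗ[K] W)
    {L : Submodule K (V ⊗[K] V)} {L' : Submodule K (W ⊗[K] W)}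
    (hL : L.map (TensorProduct.map (g (Fin.natAdd a (Fin.castAdd b 0)))
      (g (Fin.natAdd a (Fin.castAdd b 1)))) ≤ L') :
    (segAux K V a b L).map (PiTensorProduct.map g) ≤ segAux K W a b L' := by
  rw [segAux, ← Submodule.map_comp, map_comp_mulEquiv, Submodule.map_comp]
  refine Submodule.map_mono ((map_tsub_le _ _ _ _).trans (tsub_mono le_top ?_))
  rw [← Submodule.map_comp, map_comp_mulEquiv, Submodule.map_comp]
  refine Submodule.map_mono ((map_tsub_le _ _ _ _).trans (tsub_mono ?_ le_top))
  rw [← Submodule.map_comp, map_comp_pow2, Submodule.map_comp]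
  exact Submodule.map_mono hL

theorem map_shiftSub_le {q : ℕ} (f : Fin q → V →ₗ[K] W) {L : Submodule K (V ⊗[K] V)}
    {L' : Submodule K (W ⊗[K] W)} (j : Fin (q - 1))
    (hL : L.map (TensorProduct.map (f ⟨j, by omega⟩) (f ⟨j + 1, by omega⟩)) ≤ L') :
    (shiftSub K V q L j).map (PiTensorProduct.map f) ≤ shiftSub K W q L' j := by
  rw [shiftSub, ← Submodule.map_comp, map_comp_cast, Submodule.map_comp]
  exact Submodule.map_mono (map_segAux_le _ _ _ hL)

theorem map_idealComp_le {q : ℕ} (f : Fin q → V →ₗ[K] W) {M : Submodule K (V ⊗[K] V)}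
    {M' : Submodule K (W ⊗[K] W)}
    (hM : ∀ j : Fin (q - 1),
      M.map (TensorProduct.map (f ⟨j, by omega⟩) (f ⟨j + 1, by omega⟩)) ≤ M') :
    (idealComp K V q M).map (PiTensorProduct.map f) ≤ idealComp K W q M' := by
  rw [idealComp, idealComp, Submodule.map_iSup]
  exact iSup_mono fun j => map_shiftSub_le f j (hM j)

theorem tprod_mem_shiftSub {q : ℕ} {L : Submodule K (V ⊗[K] V)} (j : Fin (q - 1))
    (z : Fin q → V) (h : z ⟨j, by omega⟩ ⊗ₜ[K] z ⟨j + 1, by omega⟩ ∈ L) :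
    tprod K z ∈ shiftSub K V q L j := by
  -- `tprod K z` is the image of `tprod K 1 ∈ shiftSub K K q ⊤ j = ⊤` under `c ↦ c • z p`
  let f : Fin q → K →ₗ[K] V := fun p => LinearMap.toSpanSingleton K V (z p)
  have hf : PiTensorProduct.map f (tprod K fun _ => 1) = tprod K z := by
    simp [f]
  refine hf ▸ map_shiftSub_le f j ?_ ⟨_, (shiftSub_top q j).ge trivial, rfl⟩
  rintro _ ⟨x, -, rfl⟩
  induction x using TensorProduct.induction_on with
  | zero => simp
  | tmul a b => simpa [f, ← TensorProduct.smul_tmul'] using L.smul_mem b (L.smul_mem a h)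
  | add x y hx hy => simpa using L.add_mem hx hy

theorem tprod_mem_idealComp_of_mem {q : ℕ} (h2 : 2 ≤ q) {X : Submodule K V} {z : Fin q → V}
    {p : Fin q} (hp : z p ∈ X) :
    tprod K z ∈ idealComp K V q (tsub K X ⊤ ⊔ tsub K ⊤ X) := by
  -- the window of the shift starting at `min p (q - 2)` contains the position `p`
  refine le_iSup (fun j => shiftSub K V q _ j) ⟨min (p : ℕ) (q - 2), by omega⟩
    (tprod_mem_shiftSub _ z ?_)
  by_cases hpq : (p : ℕ) ≤ q - 2
  · have hz : z ⟨min (p : ℕ) (q - 2), by omega⟩ = z p := congrArg z (Fin.ext (by simp [hpq]))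
    rw [hz]
    exact Submodule.mem_sup_left (tmul_mem_tsub hp trivial)
  · have hz : z ⟨min (p : ℕ) (q - 2) + 1, by omega⟩ = z p :=
      congrArg z (Fin.ext (by simp; omega))
    rw [hz]
    exact Submodule.mem_sup_right (tmul_mem_tsub trivial hp)

theorem eq_top_of_tprod_single_mem {n q : ℕ} {P : Submodule K (⨂[K]^q (Fin n → K))}
    (h : ∀ c : Fin q → Fin n, (⨂ₜ[K] p, Pi.single (c p) (1 : K)) ∈ P) : P = ⊤ := by
  rw [eq_top_iff, ← (Basis.piTensorProduct fun _ => Pi.basisFun K (Fin n)).span_eq,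
    Submodule.span_le]
  rintro _ ⟨c, rfl⟩
  simpa using h c

theorem two_le_of_idealComp_eq_top {n q : ℕ} (hn : 0 < n)
    {M : Submodule K ((Fin n → K) ⊗[K] (Fin n → K))}
    (h : idealComp K (Fin n → K) q M = ⊤) : 2 ≤ q := by
  by_contra hq
  have : IsEmpty (Fin (q - 1)) := ⟨fun j => by have := j.2; omega⟩
  have hbot : idealComp K (Fin n → K) q M = ⊥ := iSup_of_empty _
  let b := Basis.piTensorProduct fun _ : Fin q => Pi.basisFun K (Fin n)
  exact b.ne_zero (fun _ => ⟨0, hn⟩) <| (Submodule.mem_bot K).1 <| hbot ▸ h ▸ trivial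

theorem quadDim_eq_zero_iff [FiniteDimensional K V] {q : ℕ} {M : Submodule K (V ⊗[K] V)} :
    quadDim K V q M = 0 ↔ idealComp K V q M = ⊤ := by
  rw [quadDim, finrank_zero_iff, Submodule.Quotient.subsingleton_iff]

theorem finrank_finset_sup_le_sum {ι E : Type*} [AddCommGroup E] [Module K E]
    [FiniteDimensional K E] (p : ι → Submodule K E) (s : Finset ι) :
    finrank K ↥(s.sup p) ≤ ∑ i ∈ s, finrank K (p i) := by
  classical
  induction s using Finset.induction_on with
  | empty => simp
  | insert a s ha ih =>
    rw [Finset.sup_insert, Finset.sum_insert ha]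
    exact (Submodule.finrank_add_le_finrank_add_finrank _ _).trans (by omega)

theorem finrank_iSup_le_sum {ι E : Type*} [Fintype ι] [AddCommGroup E] [Module K E]
    [FiniteDimensional K E] (p : ι → Submodule K E) :
    finrank K ↥(⨆ i, p i) ≤ ∑ i, finrank K (p i) :=
  Finset.sup_univ_eq_iSup p ▸ finrank_finset_sup_le_sum p Finset.univ

theorem exists_submodule_finrank_eq {E : Type*} [AddCommGroup E] [Module K E]
    [FiniteDimensional K E] {d : ℕ} (h : d ≤ finrank K E) :
    ∃ M : Submodule K E, finrank K M = d := by
  let b := Module.finBasis K E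
  refine ⟨Submodule.span K (Set.range (b ∘ Fin.castLE h)), ?_⟩
  rw [finrank_span_eq_card (b.linearIndependent.comp _ (Fin.castLE_injective h)),
    Fintype.card_fin]

variable (K) in
noncomputable def blockIncl {n m : ℕ} (r : ℕ) (a : Fin m) :
    (Fin n → K) →ₗ[K] (Fin (n * m + r) → K) :=
  (Pi.basisFun K (Fin n)).constr K fun i => Pi.single (Fin.castAdd r (finProdFinEquiv (i, a))) 1

theorem blockIncl_single {n m : ℕ} (r : ℕ) (a : Fin m) (i : Fin n) :
    blockIncl K r a (Pi.single i 1) = Pi.single (Fin.castAdd r (finProdFinEquiv (i, a))) 1 := by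
  rw [← Pi.basisFun_apply, blockIncl, Basis.constr_basis]

variable (K) in
noncomputable def tailSpan (N r : ℕ) : Submodule K (Fin (N + r) → K) :=
  Submodule.span K (Set.range fun t : Fin r => Pi.single (Fin.natAdd N t) 1)

theorem finrank_tailSpan_le (N r : ℕ) : finrank K (tailSpan K N r) ≤ r :=
  (finrank_range_le_card _).trans_eq (Fintype.card_fin r)

noncomputable def blockCopies {n : ℕ} (M : Submodule K ((Fin n → K) ⊗[K] (Fin n → K)))
    (m r : ℕ) : Submodule K ((Fin (n * m + r) → K) ⊗[K] (Fin (n * m + r) → K)) :=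
  ⨆ ab : Fin m × Fin m, M.map (TensorProduct.map (blockIncl K r ab.1) (blockIncl K r ab.2))

theorem map_le_blockCopies {n : ℕ} (M : Submodule K ((Fin n → K) ⊗[K] (Fin n → K)))
    {m : ℕ} (r : ℕ) (a b : Fin m) :
    M.map (TensorProduct.map (blockIncl K r a) (blockIncl K r b)) ≤ blockCopies M m r :=
  le_iSup (fun ab : Fin m × Fin m => M.map
    (TensorProduct.map (blockIncl K r ab.1) (blockIncl K r ab.2))) (a, b)

theorem finrank_blockCopies_le {n : ℕ} (M : Submodule K ((Fin n → K) ⊗[K] (Fin n → K)))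
    (m r : ℕ) : finrank K (blockCopies M m r) ≤ m ^ 2 * finrank K M :=
  (finrank_iSup_le_sum _).trans <|
    (Finset.sum_le_sum fun _ _ => Submodule.finrank_map_le _ _).trans (by simp [sq])

noncomputable def blockRel {n : ℕ} (M : Submodule K ((Fin n → K) ⊗[K] (Fin n → K)))
    (m r : ℕ) : Submodule K ((Fin (n * m + r) → K) ⊗[K] (Fin (n * m + r) → K)) :=
  blockCopies M m r ⊔ (tsub K (tailSpan K (n * m) r) ⊤ ⊔ tsub K ⊤ (tailSpan K (n * m) r))

theorem finrank_blockRel_le {n : ℕ} (M : Submodule K ((Fin n → K) ⊗[K] (Fin n → K)))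
    (m r : ℕ) : finrank K (blockRel M m r) ≤ m ^ 2 * finrank K M + 2 * r * (n * m + r) := by
  have hcopies := finrank_blockCopies_le M m r
  have htail := finrank_tailSpan_le (K := K) (n * m) r
  have hleft : finrank K (tsub K (tailSpan K (n * m) r) ⊤) ≤ r * (n * m + r) :=
    (finrank_tsub_le _ (⊤ : Submodule K (Fin (n * m + r) → K))).trans
      (by simpa using Nat.mul_le_mul_right (n * m + r) htail)
  have hright : finrank K (tsub K ⊤ (tailSpan K (n * m) r)) ≤ (n * m + r) * r :=
    (finrank_tsub_le (⊤ : Submodule K (Fin (n * m + r) → K)) _).trans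
      (by simpa using Nat.mul_le_mul_left (n * m + r) htail)
  calc finrank K (blockRel M m r)
      ≤ finrank K (blockCopies M m r) +
        (finrank K (tsub K (tailSpan K (n * m) r) ⊤) +
          finrank K (tsub K ⊤ (tailSpan K (n * m) r))) :=
        (Submodule.finrank_add_le_finrank_add_finrank _ _).trans
          (Nat.add_le_add_left (Submodule.finrank_add_le_finrank_add_finrank _ _) _)
    _ ≤ m ^ 2 * finrank K M + 2 * r * (n * m + r) := by linarith

theorem idealComp_blockRel_eq_top {n q : ℕ} (h2 : 2 ≤ q)
    {M : Submodule K ((Fin n → K) ⊗[K] (Fin n → K))}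
    (hM : idealComp K (Fin n → K) q M = ⊤) (m r : ℕ) :
    idealComp K (Fin (n * m + r) → K) q (blockRel M m r) = ⊤ := by
  refine eq_top_of_tprod_single_mem fun c => ?_
  by_cases htail : ∃ p t, c p = Fin.natAdd (n * m) t
  · obtain ⟨p, t, hpt⟩ := htail
    refine idealComp_mono q le_sup_right (tprod_mem_idealComp_of_mem h2 (p := p) ?_)
    exact hpt ▸ Submodule.subset_span ⟨t, rfl⟩
  · push Not at htail
    have hblock : ∀ p, ∃ k, c p = Fin.castAdd r k := fun p =>
      Fin.addCases
        (motive := fun x => (∀ t, x ≠ Fin.natAdd (n * m) t) → ∃ k, x = Fin.castAdd r k)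
        (fun k _ => ⟨k, rfl⟩) (fun t h => absurd rfl (h t)) (c p) (htail p)
    choose k hk using hblock
    let ia : Fin q → Fin n × Fin m := fun p => finProdFinEquiv.symm (k p)
    let f : Fin q → (Fin n → K) →ₗ[K] (Fin (n * m + r) → K) :=
      fun p => blockIncl K r (ia p).2
    have hc : (⨂ₜ[K] p, Pi.single (c p) (1 : K)) =
        PiTensorProduct.map f (⨂ₜ[K] p, Pi.single (ia p).1 (1 : K)) := by
      simp only [f, ia, map_tprod, blockIncl_single, Prod.mk.eta, Equiv.apply_symm_apply, hk]
    rw [hc]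
    exact map_idealComp_le f (fun j => (map_le_blockCopies M r _ _).trans le_sup_left)
      ⟨_, hM.ge trivial, rfl⟩

theorem hq_finrank_eq_zero {n q : ℕ} {M : Submodule K ((Fin n → K) ⊗[K] (Fin n → K))}
    (hM : idealComp K (Fin n → K) q M = ⊤) : hq K n (finrank K M) q = 0 :=
  Nat.sInf_eq_zero.2 (Or.inl ⟨M, rfl, quadDim_eq_zero_iff.2 hM⟩)

theorem hq_sq_eq_zero {n q : ℕ} (h2 : 2 ≤ q) : hq K n (n ^ 2) q = 0 := by
  simpa [sq] using hq_finrank_eq_zero (idealComp_top (K := K) (V := Fin n → K) h2)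

/-- For `d > n ^ 2` there is no relation space of dimension `d`, so `hq K n d q = sInf ∅ = 0`. -/
theorem exists_idealComp_eq_top_of_hq_eq_zero {n d q : ℕ} (hd : d ≤ n ^ 2)
    (h : hq K n d q = 0) : ∃ M : Submodule K ((Fin n → K) ⊗[K] (Fin n → K)),
      finrank K M = d ∧ idealComp K (Fin n → K) q M = ⊤ := by
  obtain ⟨⟨M, hMd, hM⟩⟩ | hempty := Nat.sInf_eq_zero.1 h
  · exact ⟨M, hMd, quadDim_eq_zero_iff.1 hM⟩
  · obtain ⟨M, hMd⟩ := exists_submodule_finrank_eq (K := K)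
      (E := (Fin n → K) ⊗[K] (Fin n → K)) (d := d) (by simpa [sq] using hd)
    exact absurd (hempty ▸ ⟨M, hMd, rfl⟩ : quadDim K (Fin n → K) q M ∈ (∅ : Set ℕ)) id

theorem sInf_hq_eq_zero_le {q : ℕ} (h2 : 2 ≤ q) (n m r : ℕ) :
    sInf {d | hq K (n * m + r) d q = 0} ≤
      m ^ 2 * sInf {d | hq K n d q = 0} + 2 * r * (n * m + r) := by
  have hsq : n ^ 2 ∈ {d | hq K n d q = 0} := hq_sq_eq_zero h2
  obtain ⟨M, hMd, hM⟩ :=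
    exists_idealComp_eq_top_of_hq_eq_zero (Nat.sInf_le hsq) (Nat.sInf_mem ⟨_, hsq⟩)
  have hmem : finrank K (blockRel M m r) ∈ {d | hq K (n * m + r) d q = 0} :=
    hq_finrank_eq_zero (idealComp_blockRel_eq_top h2 hM m r)
  exact (Nat.sInf_le hmem).trans (hMd ▸ finrank_blockRel_le M m r)

theorem sInf_exists_hq_eq_zero_le {n : ℕ} (hn : 0 < n) (m r : ℕ) :
    sInf {d | ∃ q, hq K (n * m + r) d q = 0} ≤
      m ^ 2 * sInf {d | ∃ q, hq K n d q = 0} + 2 * r * (n * m + r) := by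
  have hsq : n ^ 2 ∈ {d | ∃ q, hq K n d q = 0} := ⟨2, hq_sq_eq_zero le_rfl⟩
  obtain ⟨q, hq0⟩ := Nat.sInf_mem ⟨_, hsq⟩
  obtain ⟨M, hMd, hM⟩ := exists_idealComp_eq_top_of_hq_eq_zero (Nat.sInf_le hsq) hq0
  have hmem : finrank K (blockRel M m r) ∈ {d | ∃ q, hq K (n * m + r) d q = 0} :=
    ⟨q, hq_finrank_eq_zero
      (idealComp_blockRel_eq_top (two_le_of_idealComp_eq_top hn hM) hM m r)⟩
  exact (Nat.sInf_le hmem).trans (hMd ▸ finrank_blockRel_le M m r)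

end GS

section Fekete

variable {D : ℕ → ℕ}

theorem div_sq_le_div_sq_add
    (hD : ∀ n m r, 0 < n → r < n → D (n * m + r) ≤ m ^ 2 * D n + 2 * r * (n * m + r))
    {n N : ℕ} (hn : 0 < n) (hN : 0 < N) :
    (D N : ℝ) / (N : ℝ) ^ 2 ≤ (D n : ℝ) / (n : ℝ) ^ 2 + 2 * n / N := by
  set m := N / n
  set r := N % n
  have hmr : n * m + r = N := Nat.div_add_mod N n
  have hDN : (D N : ℝ) ≤ m ^ 2 * D n + 2 * r * N := by
    exact_mod_cast hmr ▸ hD n m r hn (Nat.mod_lt N hn)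
  have hmn : (m : ℝ) * n / N ≤ 1 := by
    rw [div_le_one (by positivity)]
    exact_mod_cast hmr ▸ (by nlinarith : m * n ≤ n * m + r)
  have hr : (r : ℝ) ≤ n := by exact_mod_cast (Nat.mod_lt N hn).le
  calc (D N : ℝ) / (N : ℝ) ^ 2 ≤ (m ^ 2 * D n + 2 * r * N) / (N : ℝ) ^ 2 := by gcongr
    _ = (m * n / N) ^ 2 * ((D n : ℝ) / (n : ℝ) ^ 2) + 2 * r / N := by field_simp
    _ ≤ 1 ^ 2 * ((D n : ℝ) / (n : ℝ) ^ 2) + 2 * n / N := by gcongr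
    _ = (D n : ℝ) / (n : ℝ) ^ 2 + 2 * n / N := by ring

theorem tendsto_div_sq_iInf
    (hD : ∀ n m r, 0 < n → r < n → D (n * m + r) ≤ m ^ 2 * D n + 2 * r * (n * m + r)) :
    Tendsto (fun n : ℕ => (D n : ℝ) / (n : ℝ) ^ 2) atTop
      (nhds (⨅ n : ℕ+, (D n : ℝ) / (n : ℝ) ^ 2)) := by
  have hbdd : BddBelow (Set.range fun n : ℕ+ => (D n : ℝ) / (n : ℝ) ^ 2) :=
    ⟨0, by rintro _ ⟨n, rfl⟩; positivity⟩
  refine tendsto_order.2 ⟨fun a ha => ?_, fun b hb => ?_⟩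
  · filter_upwards [eventually_gt_atTop 0] with N hN
    exact ha.trans_le (ciInf_le hbdd ⟨N, hN⟩)
  · obtain ⟨n, hn⟩ := exists_lt_of_ciInf_lt hb
    have htail : Tendsto (fun N : ℕ => (D n : ℝ) / (n : ℝ) ^ 2 + 2 * (n : ℕ) / N) atTop
        (nhds ((D n : ℝ) / (n : ℝ) ^ 2 + 0)) :=
      tendsto_const_nhds.add (tendsto_const_div_atTop_nhds_zero_nat _)
    filter_upwards [htail.eventually_lt_const (by simpa using hn), eventually_gt_atTop 0]
      with N hNb hN
    exact (div_sq_le_div_sq_add hD n.pos hN).trans_lt hNb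

end Fekete

/-- Let `K` be a field and `3 ≤ q ≤ ∞`. With
`d(K, n, q) = min{d : h_q(K,n,d) = 0}` (and `d(K, n, ∞) = min{d : h_q(K,n,d) = 0 for some q}`),
the limit of `d(K,n,q)/n²` as `n → ∞` exists and equals `inf_n d(K,n,q)/n²`. -/
theorem limit_dn_div_sq (K : Type*) [Field K] :
    (∀ q : ℕ, 3 ≤ q →
      ∀ D : ℕ → ℕ, D = (fun n => sInf { d | GS.hq K n d q = 0 }) →
      Tendsto (fun n : ℕ => (D n : ℝ) / (n : ℝ) ^ 2) atTop
        (nhds (⨅ n : ℕ+, (D n : ℝ) / (n : ℝ) ^ 2))) ∧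
    (∀ D : ℕ → ℕ, D = (fun n => sInf { d | ∃ q : ℕ, GS.hq K n d q = 0 }) →
      Tendsto (fun n : ℕ => (D n : ℝ) / (n : ℝ) ^ 2) atTop
        (nhds (⨅ n : ℕ+, (D n : ℝ) / (n : ℝ) ^ 2))) := by
  refine ⟨fun q hq D hD => ?_, fun D hD => ?_⟩ <;> subst hD <;>
    refine tendsto_div_sq_iInf fun n m r hn _ => ?_
  · exact GS.sInf_hq_eq_zero_le (by omega) n m r
  · exact GS.sInf_exists_hq_eq_zero_le hn m r
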